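/- Let n ≥ 1, let D (records) and V (predicates) be measurable spaces, let f be a trade-off function, let P be a probability measure on D, let w ∈ [0, 1/n], let e : D × V → {0,1} be jointly measurable and satisfy ∫_D e(z,v) dP(z) = w for every v ∈ V, and let κ be a Markov kernel from Dⁿ (functions Fin n → D) to V satisfying f-DP with respect to the replace-one relation. Then the predicate-singling-out success probability satisfies ∫_{Dⁿ} κ(S)({v ∈ V : Σ_{i=1}^{n} e(S_i, v) = 1}) dPⁿ(S) ≤ n·(1 − f(w)). -/

import Mathlib

open MeasureTheory ProbabilityTheory

/-- A trade-off function: convex, continuous, non-increasing on `[0,1]`,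
taking values in `[0,1]` with `f α ≤ 1 - α`. -/
def IsTradeoff (f : ℝ → ℝ) : Prop :=
  ConvexOn ℝ (Set.Icc (0:ℝ) 1) f ∧ ContinuousOn f (Set.Icc (0:ℝ) 1) ∧
  AntitoneOn f (Set.Icc (0:ℝ) 1) ∧
  ∀ x ∈ Set.Icc (0:ℝ) 1, f x ∈ Set.Icc (0:ℝ) 1 ∧ f x ≤ 1 - x

/-- The pair `(P, Q)` satisfies the `f`-DP inequality: every randomized test `φ` has
`∫ φ dQ ≤ 1 - f (∫ φ dP)`. -/
def FDPIneq {Θ : Type*} [MeasurableSpace Θ] (f : ℝ → ℝ) (P Q : Measure Θ) : Prop :=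
  ∀ φ : Θ → ℝ, Measurable φ → (∀ θ, φ θ ∈ Set.Icc (0:ℝ) 1) →
    ∫ θ, φ θ ∂Q ≤ 1 - f (∫ θ, φ θ ∂P)

/-!
The success event forces some record to match the output predicate, so a union bound reduces the
claim to showing that, for each coordinate `i`, the output matches `S i` with probability at most
`1 - f w`. Fix the other records and a reference value `z₀` of the `i`-th one. For each `y`, the
matching set of `y`, used as a test in the `f`-DP inequality between the datasets with `y` and
with `z₀` at position `i`, gives `κ(y)(match y) ≤ 1 - f (X y)`, where `X y` is the probability of
the same set under the reference output. By Fubini and the weight condition `X` has `P`-mean `w`,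
so averaging over `y` and Jensen's inequality for the convex `f` give the bound.
-/

lemma setOf_sum_ite_eq_one_subset_iUnion {ι V : Type*} [Fintype ι] (b : ι → V → Bool) :
    {v | (∑ i, if b i v = true then (1:ℕ) else 0) = 1} ⊆ ⋃ i, {v | b i v = true} := by
  intro v hv
  obtain ⟨i, -, hi⟩ := Finset.exists_ne_zero_of_sum_ne_zero (ne_of_eq_of_ne hv one_ne_zero)
  exact Set.mem_iUnion.2 ⟨i, by simpa using hi⟩

section

variable {α D V : Type*} [MeasurableSpace α] [MeasurableSpace D] [MeasurableSpace V]

lemma integrable_of_forall_mem_Icc {μ : Measure α} [IsFiniteMeasure μ] {X : α → ℝ}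
    (hX : AEStronglyMeasurable X μ) (h01 : ∀ a, X a ∈ Set.Icc (0:ℝ) 1) : Integrable X μ :=
  Integrable.of_bound hX 1 <| ae_of_all _ fun a => by
    rw [Real.norm_eq_abs, abs_le]
    exact ⟨by linarith [(h01 a).1], (h01 a).2⟩

lemma measureReal_mem_Icc (μ : Measure α) [IsProbabilityMeasure μ] (s : Set α) :
    μ.real s ∈ Set.Icc (0:ℝ) 1 :=
  ⟨measureReal_nonneg, measureReal_le_one⟩

lemma FDPIneq.measureReal_le {f : ℝ → ℝ} {P Q : Measure α} (h : FDPIneq f P Q) {s : Set α}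
    (hs : MeasurableSet s) : Q.real s ≤ 1 - f (P.real s) := by
  have h01 : ∀ a, s.indicator (1 : α → ℝ) a ∈ Set.Icc (0:ℝ) 1 := fun a => by
    by_cases ha : a ∈ s <;> simp [ha]
  simpa [integral_indicator_one hs] using h _ (measurable_one.indicator hs) h01

lemma IsTradeoff.integrable_comp {f : ℝ → ℝ} (hf : IsTradeoff f) {μ : Measure α}
    [IsFiniteMeasure μ] {X : α → ℝ} (hX : Measurable X) (h01 : ∀ a, X a ∈ Set.Icc (0:ℝ) 1) :
    Integrable (fun a => f (X a)) μ := by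
  have hfX : Measurable fun a => f (X a) :=
    hf.2.1.domRestrict.measurable.comp (hX.subtype_mk (h := h01))
  exact integrable_of_forall_mem_Icc hfX.aestronglyMeasurable fun a => (hf.2.2.2 _ (h01 a)).1

lemma IsTradeoff.le_integral_comp {f : ℝ → ℝ} (hf : IsTradeoff f) {μ : Measure α}
    [IsProbabilityMeasure μ] {X : α → ℝ} (hX : Measurable X)
    (h01 : ∀ a, X a ∈ Set.Icc (0:ℝ) 1) :
    f (∫ a, X a ∂μ) ≤ ∫ a, f (X a) ∂μ :=
  hf.1.map_integral_le hf.2.1 isClosed_Icc (ae_of_all _ h01)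
    (integrable_of_forall_mem_Icc hX.aestronglyMeasurable h01) (hf.integrable_comp hX h01)

lemma integral_measureReal_prodMk_comm (μ : Measure D) [IsFiniteMeasure μ] (ν : Measure V)
    [IsFiniteMeasure ν] {s : Set (D × V)} (hs : MeasurableSet s) :
    ∫ x, ν.real (Prod.mk x ⁻¹' s) ∂μ = ∫ y, μ.real ((·, y) ⁻¹' s) ∂ν := by
  simp only [measureReal_def]
  rw [integral_toReal (measurable_measure_prodMk_left hs).aemeasurable
      (ae_of_all _ fun _ => measure_lt_top _ _),
    integral_toReal (measurable_measure_prodMk_right hs).aemeasurable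
      (ae_of_all _ fun _ => measure_lt_top _ _),
    ← Measure.prod_apply hs, ← Measure.prod_apply_symm hs]

lemma ProbabilityTheory.Kernel.integrable_measureReal_prodMk_comp (κ : Kernel α V)
    [IsMarkovKernel κ] (μ : Measure α) [IsFiniteMeasure μ] {g : α → D} (hg : Measurable g)
    {s : Set (D × V)} (hs : MeasurableSet s) :
    Integrable (fun a => (κ a).real (Prod.mk (g a) ⁻¹' s)) μ := by
  have hmeas : Measurable fun a => (κ a).real (Prod.mk (g a) ⁻¹' s) :=
    (Kernel.measurable_kernel_prodMk_left (t := Prod.map g id ⁻¹' s)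
      ((hg.prodMap measurable_id) hs)).ennreal_toReal
  exact integrable_of_forall_mem_Icc hmeas.aestronglyMeasurable fun a => measureReal_mem_Icc _ _

lemma integral_measureReal_prodMk_le_of_forall_fdp {f : ℝ → ℝ} (hf : IsTradeoff f)
    {P : Measure D} [IsProbabilityMeasure P] {κ : Kernel D V} [IsMarkovKernel κ]
    (hDP : ∀ y z, FDPIneq f (κ z) (κ y)) {s : Set (D × V)} (hs : MeasurableSet s) {w : ℝ}
    (hweight : ∀ v, P.real ((·, v) ⁻¹' s) = w) :
    ∫ y, (κ y).real (Prod.mk y ⁻¹' s) ∂P ≤ 1 - f w := by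
  obtain ⟨z₀⟩ := nonempty_of_isProbabilityMeasure P
  set X : D → ℝ := fun y => (κ z₀).real (Prod.mk y ⁻¹' s)
  have hX : Measurable X := (measurable_measure_prodMk_left hs).ennreal_toReal
  have hX01 : ∀ y, X y ∈ Set.Icc (0:ℝ) 1 := fun y => measureReal_mem_Icc _ _
  have hmean : ∫ y, X y ∂P = w := by
    simp [X, integral_measureReal_prodMk_comm P (κ z₀) hs, hweight]
  have hjensen : f w ≤ ∫ y, f (X y) ∂P := hmean ▸ hf.le_integral_comp hX hX01
  have hfX : Integrable (fun y => f (X y)) P := hf.integrable_comp hX hX01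
  calc ∫ y, (κ y).real (Prod.mk y ⁻¹' s) ∂P
      ≤ ∫ y, (1 - f (X y)) ∂P :=
        integral_mono (κ.integrable_measureReal_prodMk_comp P measurable_id hs)
          ((integrable_const 1).sub hfX)
          fun y => (hDP y z₀).measureReal_le (measurable_prodMk_left hs)
    _ = 1 - ∫ y, f (X y) ∂P := by simp [integral_sub (integrable_const 1) hfX]
    _ ≤ 1 - f w := by linarith

lemma integral_measureReal_prodMk_eval_le_of_replaceOne {n : ℕ} {f : ℝ → ℝ}
    (hf : IsTradeoff f) {P : Measure D} [IsProbabilityMeasure P]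
    {κ : Kernel (Fin n → D) V} [IsMarkovKernel κ]
    (hDP : ∀ S S' : Fin n → D, (∃ i : Fin n, ∀ j : Fin n, j ≠ i → S j = S' j) →
      FDPIneq f (κ S') (κ S))
    {s : Set (D × V)} (hs : MeasurableSet s) {w : ℝ}
    (hweight : ∀ v, P.real ((·, v) ⁻¹' s) = w) (i : Fin n) :
    ∫ S, (κ S).real (Prod.mk (S i) ⁻¹' s) ∂(Measure.pi fun _ => P) ≤ 1 - f w := by
  obtain ⟨m, rfl⟩ : ∃ m, n = m + 1 := Nat.exists_eq_add_one.mpr i.pos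
  set E := MeasurableEquiv.piFinSuccAbove (fun _ : Fin (m + 1) => D) i
  have hE := measurePreserving_piFinSuccAbove (fun _ : Fin (m + 1) => P) i
  have hE_apply_self : ∀ y r, E.symm (y, r) i = y := fun y r => by
    simp [E, Fin.insertNthEquiv]
  have hE_apply_succAbove : ∀ y r k, E.symm (y, r) (i.succAbove k) = r k := fun y r k => by
    simp [E, Fin.insertNthEquiv]
  have hint : Integrable (fun S : Fin (m + 1) → D => (κ S).real (Prod.mk (S i) ⁻¹' s))
      (Measure.pi fun _ => P) :=
    κ.integrable_measureReal_prodMk_comp _ (measurable_pi_apply i) hs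
  have hint_prod : Integrable (fun p => (κ (E.symm p)).real (Prod.mk (E.symm p i) ⁻¹' s))
      (P.prod (Measure.pi fun _ => P)) :=
    (hE.symm.integrable_comp_emb E.symm.measurableEmbedding).mpr hint
  have hfiber : ∀ r : Fin m → D,
      ∫ y, (κ (E.symm (y, r))).real (Prod.mk y ⁻¹' s) ∂P ≤ 1 - f w := fun r =>
    integral_measureReal_prodMk_le_of_forall_fdp
      (κ := κ.comap _ (E.symm.measurable.comp measurable_prodMk_right)) hf
      (fun y z => hDP _ _ ⟨i, fun j hj => by
        obtain ⟨k, rfl⟩ := Fin.exists_succAbove_eq hj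
        simp [hE_apply_succAbove]⟩) hs hweight
  rw [← hE.symm.integral_comp', integral_prod_symm _ hint_prod]
  calc ∫ r, ∫ y, (κ (E.symm (y, r))).real (Prod.mk ((E.symm (y, r)) i) ⁻¹' s) ∂P
        ∂(Measure.pi fun _ => P)
      ≤ ∫ _r, (1 - f w) ∂(Measure.pi fun _ : Fin m => P) :=
        integral_mono hint_prod.integral_prod_right (integrable_const _)
          fun r => by simpa only [hE_apply_self] using hfiber r
    _ = 1 - f w := by simp

end

theorem stmt_19_general {D V : Type*} [MeasurableSpace D] [MeasurableSpace V]
    (n : ℕ)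
    (f : ℝ → ℝ) (hf : IsTradeoff f)
    (P : Measure D) [IsProbabilityMeasure P]
    (w : ℝ)
    (e : D → V → Bool) (he : Measurable (Function.uncurry e))
    (hweight : ∀ v : V, ∫ z, (if e z v = true then (1:ℝ) else 0) ∂P = w)
    (κ : Kernel (Fin n → D) V) [IsMarkovKernel κ]
    (hDP : ∀ S S' : Fin n → D, (∃ i : Fin n, ∀ j : Fin n, j ≠ i → S j = S' j) →
      FDPIneq f (κ S') (κ S)) :
    ∫ S, ((κ S) {v : V | (∑ i : Fin n, if e (S i) v = true then (1:ℕ) else 0) = 1}).toReal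
        ∂(Measure.pi fun _ : Fin n => P) ≤ (n : ℝ) * (1 - f w) := by
  set s : Set (D × V) := Function.uncurry e ⁻¹' {true}
  have hs : MeasurableSet s := he (measurableSet_singleton true)
  have hweight' : ∀ v, P.real ((·, v) ⁻¹' s) = w := fun v => by
    rw [← hweight v, ← integral_indicator_one (measurable_prodMk_right hs)]
    congr 1 with z
    by_cases hz : e z v = true <;> simp [s, hz]
  have hint : ∀ i, Integrable (fun S : Fin n → D => (κ S).real (Prod.mk (S i) ⁻¹' s))
      (Measure.pi fun _ => P) := fun i =>
    κ.integrable_measureReal_prodMk_comp _ (measurable_pi_apply i) hs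
  calc _ ≤ ∫ S, ∑ i, (κ S).real (Prod.mk (S i) ⁻¹' s) ∂(Measure.pi fun _ => P) :=
        integral_mono_of_nonneg (ae_of_all _ fun _ => ENNReal.toReal_nonneg)
          (integrable_finsetSum _ fun i _ => hint i) (ae_of_all _ fun S =>
            (measureReal_mono (setOf_sum_ite_eq_one_subset_iUnion _)).trans
              (measureReal_iUnion_fintype_le _))
    _ = ∑ i, ∫ S, (κ S).real (Prod.mk (S i) ⁻¹' s) ∂(Measure.pi fun _ => P) :=
        integral_finsetSum _ fun i _ => hint i
    _ ≤ ∑ _i : Fin n, (1 - f w) := Finset.sum_le_sum fun i _ =>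
        integral_measureReal_prodMk_eval_le_of_replaceOne hf hDP hs hweight' i
    _ = n * (1 - f w) := by
        rw [Finset.sum_const, Finset.card_univ, Fintype.card_fin, nsmul_eq_mul]

/-- Theorem E.4: `f`-DP bound on average-dataset predicate singling out, for
adversaries outputting predicates of weight exactly `w` under `P`.
`e z v = true` means predicate `v` matches record `z`. -/
theorem stmt_19 {D V : Type*} [MeasurableSpace D] [MeasurableSpace V]
    (n : ℕ) (hn : 1 ≤ n)
    (f : ℝ → ℝ) (hf : IsTradeoff f)
    (P : Measure D) [IsProbabilityMeasure P]
    (w : ℝ) (hw : w ∈ Set.Icc (0:ℝ) (1 / (n : ℝ)))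
    (e : D → V → Bool) (he : Measurable (Function.uncurry e))
    (hweight : ∀ v : V, ∫ z, (if e z v = true then (1:ℝ) else 0) ∂P = w)
    (κ : Kernel (Fin n → D) V) [IsMarkovKernel κ]
    (hDP : ∀ S S' : Fin n → D, (∃ i : Fin n, ∀ j : Fin n, j ≠ i → S j = S' j) →
      FDPIneq f (κ S') (κ S)) :
    ∫ S, ((κ S) {v : V | (∑ i : Fin n, if e (S i) v = true then (1:ℕ) else 0) = 1}).toReal
        ∂(Measure.pi fun _ : Fin n => P) ≤ (n : ℝ) * (1 - f w) :=
  stmt_19_general n f hf P w e he hweight κ hDP
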